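/- arXiv:math/0512223 — 3 statements merged into one kernel-verified Lean document; each statement's English description precedes it below -/
import Mathlib

section
/- Fix n ≥ 1 and set B = {x ∈ V_n : f^[n](x) = x}. Then B is a block of fixed points for f^[n]: B is compact and B is relatively open in the full fixed point set {x ∈ X : f^[n](x) = x}. (This is the block assertion of the paper's Theorem A.) -/
/-!
A limit point `y` of `B` is fixed by `f^[n]` and has `f^[i] y ∈ closure V = V ∪ Λ` for
`i ≤ n - 1`. A point of `Λ` converges to `p` under forward or backward iteration, so if it is
periodic it equals `p`; and `y` lies in the forward orbit of `f^[i] y`. Hence `f^[i] y ∈ Λ` would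
force `y = p`, which the isolation of `p` among fixed points of `f^[n]` (with `p ∉ V`) excludes.
So `B` is closed in the compact set `closure V`, while `B = Fix(f^[n]) ∩ V_n` with `V_n` open.
-/

open Filter Topology Set

/-- `iterStay f V n` is the set `V_n = {x ∈ V : f^[i] x ∈ V for i = 1, …, n-1}`. -/
def iterStay {X : Type*} (f : X → X) (V : Set X) (n : ℕ) : Set X :=
  {x ∈ V | ∀ i : ℕ, 1 ≤ i → i ≤ n - 1 → f^[i] x ∈ V}

open Function

theorem Function.IsPeriodicPt.eq_of_tendsto_iterate {X : Type*} [TopologicalSpace X] [T2Space X]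
    {g : X → X} {x p : X} {n : ℕ} (hx : IsPeriodicPt g n x) (hn : 0 < n)
    (h : Tendsto (fun k => g^[k] x) atTop (𝓝 p)) : x = p :=
  tendsto_nhds_unique (tendsto_const_nhds.congr fun k => (hx.mul_const k).eq.symm)
    (h.comp (tendsto_id.nsmul_atTop hn))

section iterStay

variable {X : Type*} {f : X → X} {V : Set X} {n : ℕ}

theorem mem_iterStay_iff {x : X} : x ∈ iterStay f V n ↔ ∀ i ≤ n - 1, f^[i] x ∈ V :=
  ⟨fun ⟨h0, h⟩ i hi => i.eq_zero_or_pos.elim (fun hi0 => hi0 ▸ h0) (fun hi0 => h i hi0 hi),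
    fun h => ⟨h 0 (Nat.zero_le _), fun i _ hi => h i hi⟩⟩

variable [TopologicalSpace X]

theorem isOpen_iterStay (hf : Continuous f) (hV : IsOpen V) : IsOpen (iterStay f V n) := by
  have : iterStay f V n = ⋂ i ∈ Iic (n - 1), f^[i] ⁻¹' V := by
    ext x
    simp only [mem_iterStay_iff, mem_iInter, mem_Iic, mem_preimage]
  rw [this]
  exact (finite_Iic _).isOpen_biInter fun i _ => hV.preimage (hf.iterate i)

theorem iterate_mem_closure_of_mem_closure_iterStay (hf : Continuous f) {y : X}
    (hy : y ∈ closure (iterStay f V n)) {i : ℕ} (hi : i ≤ n - 1) : f^[i] y ∈ closure V :=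
  (hf.iterate i).closure_preimage_subset V
    (closure_mono (fun _ hx => mem_iterStay_iff.1 hx i hi) hy)

theorem isClosed_iterStay_inter_isPeriodicPt [T2Space X] (hf : Continuous f) {Λ : Set X} {p : X}
    (hfp : f p = p) (hVΛ : closure V ⊆ V ∪ Λ) (hΛ : ∀ x ∈ Λ, IsPeriodicPt f n x → x = p)
    (hp : p ∉ closure {x ∈ iterStay f V n | f^[n] x = x}) :
    IsClosed {x ∈ iterStay f V n | f^[n] x = x} := by
  refine isClosed_of_closure_subset fun y hy => ?_
  have hyper : IsPeriodicPt f n y :=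
    (isClosed_fixedPoints (hf.iterate n)).closure_subset (closure_mono (fun _ hx => hx.2) hy)
  refine ⟨mem_iterStay_iff.2 fun i hi => ?_, hyper⟩
  refine (hVΛ (iterate_mem_closure_of_mem_closure_iterStay hf
    (closure_mono (fun _ hx => hx.1) hy) hi)).resolve_right fun hiΛ => hp ?_
  have hip : f^[i] y = p := hΛ _ hiΛ (hyper.apply_iterate i)
  have hyp : y = p :=
    calc y = f^[n - i] (f^[i] y) := by
          rw [← iterate_add_apply, Nat.sub_add_cancel (hi.trans (Nat.sub_le n 1)), hyper.eq]
      _ = p := by rw [hip, iterate_fixed hfp]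
  exact hyp ▸ hy

end iterStay

theorem stmt1_general {X : Type*} [TopologicalSpace X] [T2Space X]
    (f : X ≃ₜ X) (p : X) (hfp : f p = p)
    (Js Ju Λ V : Set X)
    (hJs : Js ⊆ {x | Tendsto (fun n => (⇑f)^[n] x) atTop (𝓝 p)})
    (hJu : Ju ⊆ {x | Tendsto (fun n => (⇑f.symm)^[n] x) atTop (𝓝 p)})
    (hΛ : Λ = Js ∪ Ju) (hpΛ : p ∈ Λ)
    (hV : IsOpen V) (hVΛ : Disjoint V Λ)
    (hDc : IsCompact (V ∪ Λ)) (hD : V ∪ Λ = closure V)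
    (n : ℕ) (hn : 1 ≤ n)
    (hloc : ∃ W : Set X, IsOpen W ∧ p ∈ W ∧ ∀ x ∈ W, (⇑f)^[n] x = x → x = p) :
    IsCompact {x ∈ iterStay (⇑f) V n | (⇑f)^[n] x = x} ∧
    ∃ O : Set X, IsOpen O ∧
      {x ∈ iterStay (⇑f) V n | (⇑f)^[n] x = x} = {x | (⇑f)^[n] x = x} ∩ O := by
  have hperΛ : ∀ x ∈ Λ, IsPeriodicPt f n x → x = p := by
    rintro x hx hper
    rcases hΛ ▸ hx with hs | hu
    · exact hper.eq_of_tendsto_iterate hn (hJs hs)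
    · have hper' : IsPeriodicPt f.symm n x :=
        hper.to_leftInverse (LeftInverse.iterate f.symm_apply_apply n)
      exact hper'.eq_of_tendsto_iterate hn (hJu hu)
  have hp : p ∉ closure {x ∈ iterStay f V n | f^[n] x = x} := by
    obtain ⟨W, hWo, hpW, hWfix⟩ := hloc
    refine mem_closure_iff.not.2 fun h => ?_
    obtain ⟨x, hxW, ⟨hxV, -⟩, hxper⟩ := h W hWo hpW
    exact hVΛ.notMem_of_mem_right hpΛ (hWfix x hxW hxper ▸ hxV)
  have hclosed := isClosed_iterStay_inter_isPeriodicPt f.continuous hfp hD.ge hperΛ hp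
  exact ⟨hDc.of_isClosed_subset hclosed fun x hx => Or.inl hx.1.1,
    iterStay f V n, isOpen_iterStay f.continuous hV, Set.ext fun _ => and_comm⟩

/-- block assertion of Theorem A: `B = Fix(f^[n]) ∩ V_n` is compact and
relatively open in the fixed point set of `f^[n]`. -/
theorem stmt1 {X : Type*} [TopologicalSpace X] [T2Space X]
    (f : X ≃ₜ X) (p : X) (hfp : f p = p)
    (Js Ju Λ V : Set X)
    (hJs : Js ⊆ {x | Tendsto (fun n => (⇑f)^[n] x) atTop (𝓝 p)})
    (hJu : Ju ⊆ {x | Tendsto (fun n => (⇑f.symm)^[n] x) atTop (𝓝 p)})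
    (hΛ : Λ = Js ∪ Ju) (hΛc : IsCompact Λ) (hpΛ : p ∈ Λ)
    (hV : IsOpen V) (hVΛ : Disjoint V Λ)
    (hDc : IsCompact (V ∪ Λ)) (hD : V ∪ Λ = closure V)
    (n : ℕ) (hn : 1 ≤ n)
    (hloc : ∃ W : Set X, IsOpen W ∧ p ∈ W ∧ ∀ x ∈ W, (⇑f)^[n] x = x → x = p) :
    IsCompact {x ∈ iterStay (⇑f) V n | (⇑f)^[n] x = x} ∧
    ∃ O : Set X, IsOpen O ∧
      {x ∈ iterStay (⇑f) V n | (⇑f)^[n] x = x} = {x | (⇑f)^[n] x = x} ∩ O :=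
  stmt1_general f p hfp Js Ju Λ V hJs hJu hΛ hpΛ hV hVΛ hDc hD n hn hloc
end

section
/- For every n ≥ 1, the fixed point set of the n-th iterate of r∘f restricted to D equals {p} together with the n-periodic points of f whose first n−1 iterates stay in V: {x ∈ D : (r∘f)^[n](x) = x} = {p} ∪ {x ∈ V_n : f^[n](x) = x}. (Lemma 3.4 of the paper.) -/
open Set Function

theorem Function.iterate_apply_eq_of_eqOn {α : Type*} {f g : α → α} {s : Set α}
    (h : EqOn f g s) {x : α} {n : ℕ} (hx : ∀ i < n, f^[i] x ∈ s) : f^[n] x = g^[n] x := by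
  induction n with
  | zero => rfl
  | succ n ih =>
    rw [iterate_succ_apply', iterate_succ_apply', ← ih fun i hi => hx i (by omega)]
    exact h (hx n n.lt_succ_self)

theorem Set.EqOn.iterate_of_mapsTo {α : Type*} {f g : α → α} {s : Set α} (h : EqOn f g s)
    (hf : MapsTo f s s) (n : ℕ) : EqOn f^[n] g^[n] s :=
  fun _ hx => iterate_apply_eq_of_eqOn h fun i _ => hf.iterate i hx

section Periodic

variable {α : Type*} {f : α → α} {Λ : Set α} {p : α}

theorem eq_of_isPeriodicPt_of_iterate_mem (hfp : f p = p)
    (hper : ∀ y ∈ Λ, ∀ m : ℕ, 1 ≤ m → f^[m] y = y → y = p)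
    {x : α} {n i : ℕ} (hn : 1 ≤ n) (hx : IsPeriodicPt f n x) (hi : i ≤ n) (hiΛ : f^[i] x ∈ Λ) :
    x = p := by
  have hip : f^[i] x = p := hper _ hiΛ n hn (hx.apply_iterate i)
  calc x = f^[n - i] (f^[i] x) := by rw [← iterate_add_apply, Nat.sub_add_cancel hi, hx.eq]
    _ = p := by rw [hip, iterate_fixed hfp]

theorem eq_or_mem_iterStay_of_isPeriodicPt {D : Set α} (hfp : f p = p)
    (hper : ∀ y ∈ Λ, ∀ m : ℕ, 1 ≤ m → f^[m] y = y → y = p)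
    {x : α} {n : ℕ} (hn : 1 ≤ n) (hx : IsPeriodicPt f n x) (hD : ∀ i ≤ n, f^[i] x ∈ D) :
    x = p ∨ x ∈ iterStay f (D \ Λ) n := by
  by_cases hΛ : ∃ i ≤ n - 1, f^[i] x ∈ Λ
  · obtain ⟨i, hi, hiΛ⟩ := hΛ
    exact Or.inl (eq_of_isPeriodicPt_of_iterate_mem hfp hper hn hx (by omega) hiΛ)
  · push Not at hΛ
    exact Or.inr ⟨⟨hD 0 (Nat.zero_le n), hΛ 0 (Nat.zero_le _)⟩,
      fun i _ hi => ⟨hD i (by omega), hΛ i hi⟩⟩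

end Periodic

section Retraction

variable {X : Type*} {f r : X → X} {D Js : Set X}

theorem eqOn_comp_preimage (hrD : ∀ x ∈ D, r x = x) : EqOn (r ∘ f) f (f ⁻¹' D) :=
  fun _ hx => hrD _ hx

theorem comp_mem_of_apply_notMem (hrf : r '' (f '' D \ D) ⊆ Js) {x : X} (hx : x ∈ D)
    (hfx : f x ∉ D) : (r ∘ f) x ∈ Js :=
  hrf ⟨f x, ⟨mem_image_of_mem f hx, hfx⟩, rfl⟩

theorem mapsTo_comp_of_retraction (hrD : ∀ x ∈ D, r x = x) (hrf : r '' (f '' D \ D) ⊆ Js)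
    (hJsD : Js ⊆ D) : MapsTo (r ∘ f) D D := by
  intro x hx
  by_cases hfx : f x ∈ D
  · rwa [eqOn_comp_preimage (f := f) hrD hfx]
  · exact hJsD (comp_mem_of_apply_notMem hrf hx hfx)

theorem eqOn_comp_of_mapsTo (hrD : ∀ x ∈ D, r x = x) (hJsD : Js ⊆ D) (hJs : MapsTo f Js Js) :
    EqOn (r ∘ f) f Js :=
  fun x hx => hrD (f x) (hJsD (hJs hx))

theorem mapsTo_comp_of_mapsTo (hrD : ∀ x ∈ D, r x = x) (hJsD : Js ⊆ D) (hJs : MapsTo f Js Js) :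
    MapsTo (r ∘ f) Js Js := fun x hx => by
  rw [eqOn_comp_of_mapsTo hrD hJsD hJs hx]
  exact hJs hx

theorem mem_of_iterate_comp_eq_of_apply_notMem (hrD : ∀ x ∈ D, r x = x)
    (hrf : r '' (f '' D \ D) ⊆ Js) (hJsD : Js ⊆ D) (hJs : MapsTo f Js Js) {x : X} (hxD : x ∈ D)
    {n i : ℕ} (hx : (r ∘ f)^[n] x = x) (hi : i < n) (hleave : f ((r ∘ f)^[i] x) ∉ D) :
    x ∈ Js := by
  have hentry : (r ∘ f)^[i + 1] x ∈ Js := by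
    rw [iterate_succ_apply']
    exact comp_mem_of_apply_notMem hrf
      (mapsTo_comp_of_retraction hrD hrf hJsD |>.iterate i hxD) hleave
  rw [← hx, ← Nat.sub_add_cancel hi, iterate_add_apply]
  exact (mapsTo_comp_of_mapsTo hrD hJsD hJs).iterate _ hentry

theorem iterate_comp_eq_of_isPeriodicPt (hrD : ∀ x ∈ D, r x = x) {x : X} (hxD : x ∈ D) {n : ℕ}
    (hx : IsPeriodicPt f n x) (hD : ∀ i, 1 ≤ i → i ≤ n - 1 → f^[i] x ∈ D) :
    (r ∘ f)^[n] x = x := by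
  rw [← iterate_apply_eq_of_eqOn (eqOn_comp_preimage hrD).symm fun i hi => ?_, hx.eq]
  rw [mem_preimage, ← iterate_succ_apply' f]
  rcases (Nat.succ_le_of_lt hi).lt_or_eq with hlt | heq
  · exact hD (i + 1) (by omega) (by omega)
  · rwa [heq, hx.eq]

theorem eq_or_isPeriodicPt_of_iterate_comp_eq {Λ : Set X} {p : X} (hfp : f p = p)
    (hper : ∀ y ∈ Λ, ∀ m : ℕ, 1 ≤ m → f^[m] y = y → y = p) (hrD : ∀ x ∈ D, r x = x)
    (hrf : r '' (f '' D \ D) ⊆ Js) (hJsD : Js ⊆ D) {x : X} (hxD : x ∈ D) {n : ℕ} (hn : 1 ≤ n)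
    (hx : (r ∘ f)^[n] x = x) (hstay : ∀ i < n, f ((r ∘ f)^[i] x) ∈ D) :
    x = p ∨ x ∈ iterStay f (D \ Λ) n ∧ IsPeriodicPt f n x := by
  have hfi : ∀ i ≤ n, (r ∘ f)^[i] x = f^[i] x := fun i hi =>
    iterate_apply_eq_of_eqOn (eqOn_comp_preimage hrD) fun j hj => hstay j (by omega)
  have hfn : IsPeriodicPt f n x := (hfi n le_rfl).symm.trans hx
  refine (eq_or_mem_iterStay_of_isPeriodicPt hfp hper hn hfn fun i hi => ?_).imp_right
    fun hxV => ⟨hxV, hfn⟩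
  rw [← hfi i hi]
  exact (mapsTo_comp_of_retraction hrD hrf hJsD).iterate i hxD

end Retraction

theorem stmt3_general {X : Type*}
    (f r : X → X)
    (D Λ Js Ju : Set X) (hΛD : Λ ⊆ D) (hΛ : Λ = Js ∪ Ju)
    (p : X) (hp : p ∈ Js) (hfp : f p = p)
    (hJsinv : f '' Js ⊆ Js)
    (hper : ∀ x ∈ Λ, ∀ m : ℕ, 1 ≤ m → f^[m] x = x → x = p)
    (hrD : ∀ x ∈ D, r x = x) (hrf : r '' (f '' D \ D) ⊆ Js)
    (n : ℕ) (hn : 1 ≤ n) :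
    {x ∈ D | (r ∘ f)^[n] x = x} =
      {p} ∪ {x ∈ iterStay f (D \ Λ) n | f^[n] x = x} := by
  have hJsΛ : Js ⊆ Λ := hΛ ▸ subset_union_left
  have hJsD : Js ⊆ D := hJsΛ.trans hΛD
  have hJs : MapsTo f Js Js := mapsTo_iff_image_subset.mpr hJsinv
  ext x
  constructor
  · rintro ⟨hxD, hx⟩
    by_cases hstay : ∀ i < n, f ((r ∘ f)^[i] x) ∈ D
    · exact eq_or_isPeriodicPt_of_iterate_comp_eq hfp hper hrD hrf hJsD hxD hn hx hstay
    · push Not at hstay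
      obtain ⟨i, hi, hleave⟩ := hstay
      have hxJs := mem_of_iterate_comp_eq_of_apply_notMem hrD hrf hJsD hJs hxD hx hi hleave
      have hfn : f^[n] x = x := by
        rw [((eqOn_comp_of_mapsTo hrD hJsD hJs).symm.iterate_of_mapsTo hJs n) hxJs, hx]
      exact Or.inl (hper x (hJsΛ hxJs) n hn hfn)
  · rintro (rfl | ⟨hxV, hfn⟩)
    · exact ⟨hJsD hp, iterate_fixed (by rw [comp_apply, hfp, hrD x (hJsD hp)]) n⟩
    · exact ⟨hxV.1.1, iterate_comp_eq_of_isPeriodicPt hrD hxV.1.1 hfn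
        fun i h1 h2 => (hxV.2 i h1 h2).1⟩

/-- Lemma 3.4: the fixed points of `(r ∘ f)^[n]` in `D` are exactly
`p` together with the `n`-periodic points of `f` in `V_n`, where `V = D \ Λ`. -/
theorem stmt3 {X : Type*} [TopologicalSpace X]
    (f r : X → X) (hf : Continuous f)
    (D Λ Js Ju : Set X) (hΛD : Λ ⊆ D) (hΛ : Λ = Js ∪ Ju)
    (p : X) (hp : p ∈ Js) (hfp : f p = p)
    (hJsinv : f '' Js ⊆ Js)
    (hper : ∀ x ∈ Λ, ∀ m : ℕ, 1 ≤ m → f^[m] x = x → x = p)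
    (hrD : ∀ x ∈ D, r x = x) (hrf : r '' (f '' D \ D) ⊆ Js)
    (n : ℕ) (hn : 1 ≤ n) :
    {x ∈ D | (r ∘ f)^[n] x = x} =
      {p} ∪ {x ∈ iterStay f (D \ Λ) n | f^[n] x = x} :=
  stmt3_general f r D Λ Js Ju hΛD hΛ p hp hfp hJsinv hper hrD hrf n hn
end

section
/- The map s is continuous and is a retraction of ℝ² onto Q (s(x,y) = (x,y) for (x,y) ∈ Q and s(ℝ²) ⊆ Q). Moreover, for all real numbers 0 < λ < 1 < μ, letting T(x,y) = (λx, μy), every z ∈ ℝ² with z ≠ 0 satisfies: z ≠ T(s(z)), and the vector z − T(s(z)) does not lie in the open first quadrant {(a,b) : a > 0 and b > 0}. (The computational core of Lemma 3.1 of the paper: it implies the direction map z ↦ (z − T(s(z)))/‖z − T(s(z))‖ on a small circle about the origin omits the open first-quadrant arc of the unit circle, hence T∘s has fixed point index 0 at the origin.) -/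
/-!
With `m = min 0 (min x y) ≤ 0`, the retraction is `s (x, y) = (x - m, y - m)`. Since `y - m ≥ 0`
and `μ ≥ 1`, the second coordinate of `z - T (s z)` is `y - μ (y - m) ≤ m ≤ 0`, so this vector never
lies in the open first quadrant; and if it vanishes then `m = 0`, i.e. `z ∈ Q` and `s z = z`, and
the only fixed point of `T` is `0`.
-/

open Set

def Qset : Set (ℝ × ℝ) := {z | 0 ≤ z.1 ∧ 0 ≤ z.2}

noncomputable def sret (z : ℝ × ℝ) : ℝ × ℝ :=
  if 0 ≤ z.1 ∧ 0 ≤ z.2 then z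
  else if z.2 < 0 ∧ z.2 ≤ z.1 then (z.1 - z.2, 0)
  else (0, z.2 - z.1)

lemma sret_eq_sub_min (z : ℝ × ℝ) :
    sret z = (z.1 - min 0 (min z.1 z.2), z.2 - min 0 (min z.1 z.2)) := by
  unfold sret
  split_ifs <;> ext <;> grind

lemma continuous_sret : Continuous sret := by
  rw [funext sret_eq_sub_min]; fun_prop

lemma sret_mem (z : ℝ × ℝ) : sret z ∈ Qset := by
  rw [sret_eq_sub_min]
  constructor <;> simp only [sub_nonneg] <;> simp

lemma sret_of_mem {z : ℝ × ℝ} (hz : z ∈ Qset) : sret z = z := if_pos hz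

lemma snd_sub_mul_sret_le {mu : ℝ} (hmu : 1 ≤ mu) (z : ℝ × ℝ) :
    z.2 - mu * (sret z).2 ≤ min 0 (min z.1 z.2) := by
  rw [sret_eq_sub_min]
  have : min 0 (min z.1 z.2) ≤ z.2 := (min_le_right _ _).trans (min_le_right _ _)
  nlinarith

lemma eq_zero_of_eq_mul_sret {lam mu : ℝ} (hlam : lam ≠ 1) (hmu : 1 < mu) {z : ℝ × ℝ}
    (hz : z = (lam * (sret z).1, mu * (sret z).2)) : z = 0 := by
  have h1 : z.1 = lam * (sret z).1 := congrArg Prod.fst hz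
  have h2 : z.2 = mu * (sret z).2 := congrArg Prod.snd hz
  have hm : min 0 (min z.1 z.2) = 0 :=
    le_antisymm (min_le_left _ _) (by linarith [snd_sub_mul_sret_le hmu.le z])
  have hs : sret z = z := by rw [sret_eq_sub_min, hm]; simp
  rw [hs] at h1 h2
  have hx : (1 - lam) * z.1 = 0 := by linarith
  have hy : (mu - 1) * z.2 = 0 := by linarith
  exact Prod.ext ((mul_eq_zero.1 hx).resolve_left (sub_ne_zero.2 hlam.symm))
    ((mul_eq_zero.1 hy).resolve_left (sub_ne_zero.2 hmu.ne'))

/-- computational core of Lemma 3.1: `s` is a continuous retraction of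
`ℝ²` onto the closed first quadrant `Q`, and for `T(x,y) = (λx, μy)` with
`0 < λ < 1 < μ`, every `z ≠ 0` satisfies `z ≠ T(s z)` and `z − T(s z)` is not in the
open first quadrant. -/
theorem stmt9 :
    Continuous sret ∧ (∀ z ∈ Qset, sret z = z) ∧ (∀ z : ℝ × ℝ, sret z ∈ Qset) ∧
    ∀ lam mu : ℝ, 0 < lam → lam < 1 → 1 < mu →
      ∀ z : ℝ × ℝ, z ≠ 0 →
        z ≠ (lam * (sret z).1, mu * (sret z).2) ∧
        ¬(0 < (z - (lam * (sret z).1, mu * (sret z).2)).1 ∧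
          0 < (z - (lam * (sret z).1, mu * (sret z).2)).2) := by
  refine ⟨continuous_sret, fun z => sret_of_mem, sret_mem, ?_⟩
  intro lam mu _ hlam hmu z hz
  refine ⟨fun h => hz (eq_zero_of_eq_mul_sret hlam.ne hmu h), fun ⟨_, h2⟩ => ?_⟩
  have := snd_sub_mul_sret_le hmu.le z
  have : min 0 (min z.1 z.2) ≤ 0 := min_le_left _ _
  simp only [Prod.snd_sub] at h2
  linarith
end
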